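/- arXiv:1107.4503 — 3 statements merged into one kernel-verified Lean document; each statement's English description precedes it below -/
import Mathlib

section
/- Let S = k[X_1,...,X_n] be a polynomial ring over a field k with a monomial order, and let I be an ideal of S generated by a set of monomials and binomials (differences of two monomials). Then I has a Gröbner basis consisting entirely of monomials and binomials. -/
open MvPolynomial

/-- A monomial `X^a` (with coefficient 1). -/
def IsMonomialPoly {k : Type*} [Field k] {n : ℕ} (f : MvPolynomial (Fin n) k) : Prop :=
  ∃ a : Fin n →₀ ℕ, f = monomial a 1

/-- A binomial `X^a - X^b`. -/
def IsBinomialPoly {k : Type*} [Field k] {n : ℕ} (f : MvPolynomial (Fin n) k) : Prop :=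
  ∃ a b : Fin n →₀ ℕ, a ≠ b ∧ f = monomial a 1 - monomial b 1

/-- A monomial order: a strict linear order on exponent vectors, compatible with
addition, with `0` as smallest element. -/
def IsMonomialOrder {n : ℕ} (r : (Fin n →₀ ℕ) → (Fin n →₀ ℕ) → Prop) : Prop :=
  (∀ a, ¬ r a a) ∧ (∀ a b c, r a b → r b c → r a c) ∧
  (∀ a b, a ≠ b → r a b ∨ r b a) ∧
  (∀ a, a ≠ 0 → r 0 a) ∧
  (∀ a b c, r a b → r (a + c) (b + c))

/-- `a` is the leading exponent of `f` w.r.t. the monomial order `r`. -/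
def IsLeadExp {k : Type*} [Field k] {n : ℕ} (r : (Fin n →₀ ℕ) → (Fin n →₀ ℕ) → Prop)
    (f : MvPolynomial (Fin n) k) (a : Fin n →₀ ℕ) : Prop :=
  a ∈ f.support ∧ ∀ b ∈ f.support, b ≠ a → r b a

/-- The initial ideal of `I` w.r.t. `r`: generated by leading monomials of elements of `I`. -/
noncomputable def initialIdeal {k : Type*} [Field k] {n : ℕ} (r : (Fin n →₀ ℕ) → (Fin n →₀ ℕ) → Prop)
    (I : Ideal (MvPolynomial (Fin n) k)) : Ideal (MvPolynomial (Fin n) k) :=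
  Ideal.span {m | ∃ f ∈ I, ∃ a, IsLeadExp r f a ∧ m = monomial a 1}

/-- `G` is a Gröbner basis of `I` w.r.t. `r`. -/
def IsGroebnerBasis {k : Type*} [Field k] {n : ℕ}
    (r : (Fin n →₀ ℕ) → (Fin n →₀ ℕ) → Prop)
    (I : Ideal (MvPolynomial (Fin n) k)) (G : Set (MvPolynomial (Fin n) k)) : Prop :=
  G ⊆ (I : Set (MvPolynomial (Fin n) k)) ∧
  initialIdeal r I = Ideal.span {m | ∃ g ∈ G, ∃ a, IsLeadExp r g a ∧ m = monomial a 1}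

section Aux
variable {k : Type*} [Field k] {n : ℕ} {r : (Fin n →₀ ℕ) → (Fin n →₀ ℕ) → Prop}

lemma mo_asymm (hr : IsMonomialOrder r) {a b} (h : r a b) : ¬ r b a :=
  fun h' => hr.1 a (hr.2.1 a b a h h')

lemma mo_le (hr : IsMonomialOrder r) {a b : Fin n →₀ ℕ} (h : a ≤ b) : a = b ∨ r a b := by
  rcases eq_or_ne a b with h' | h'
  · exact Or.inl h'
  · right
    have hb : b - a ≠ 0 := by
      intro h0
      apply h'
      have := tsub_add_cancel_of_le h
      rw [h0, zero_add] at this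
      exact this
    have := hr.2.2.2.2 0 (b - a) a (hr.2.2.2.1 _ hb)
    rwa [zero_add, tsub_add_cancel_of_le h] at this

lemma mo_wf (hr : IsMonomialOrder r) : WellFounded r := by
  haveI : IsIrrefl _ r := ⟨hr.1⟩
  haveI : IsTrans _ r := ⟨hr.2.1⟩
  haveI : IsStrictOrder _ r := ⟨⟩
  rw [RelEmbedding.wellFounded_iff_isEmpty]
  constructor
  intro emb
  obtain ⟨i, j, hij, hle⟩ := (Set.isPWO_of_wellQuasiOrderedLE (Set.univ : Set (Fin n →₀ ℕ))).exists_lt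
    (f := fun i => emb i) (fun _ => Set.mem_univ _)
  have h1 : r (emb j) (emb i) := emb.map_rel_iff.mpr hij
  rcases mo_le hr hle with h | h
  · rw [h] at h1; exact hr.1 _ h1
  · exact mo_asymm hr h h1

lemma mo_finset_max (hr : IsMonomialOrder r) (S : Finset (Fin n →₀ ℕ)) (hS : S.Nonempty) :
    ∃ e ∈ S, ∀ x ∈ S, x = e ∨ r x e := by
  classical
  induction S using Finset.induction_on with
  | empty => exact absurd hS (by simp)
  | @insert a S ha IH =>
    rcases Finset.eq_empty_or_nonempty S with hS' | hS'
    · subst hS'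
      exact ⟨a, by simp, by simp⟩
    · obtain ⟨e, heS, hmax⟩ := IH hS'
      rcases eq_or_ne a e with rfl | hne
      · refine ⟨a, by simp [heS], ?_⟩
        intro x hx
        rcases Finset.mem_insert.mp hx with rfl | hx
        · exact Or.inl rfl
        · exact hmax x hx
      · rcases hr.2.2.1 a e hne with h | h
        · refine ⟨e, by simp [heS], ?_⟩
          intro x hx
          rcases Finset.mem_insert.mp hx with rfl | hx
          · exact Or.inr h
          · exact hmax x hx
        · refine ⟨a, by simp, ?_⟩
          intro x hx
          rcases Finset.mem_insert.mp hx with rfl | hx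
          · exact Or.inl rfl
          · rcases hmax x hx with rfl | h'
            · exact Or.inr h
            · exact Or.inr (hr.2.1 x e a h' h)

lemma supp_binomial {a b : Fin n →₀ ℕ} (hab : a ≠ b) :
    (monomial a 1 - monomial b 1 : MvPolynomial (Fin n) k).support = {a, b} := by
  classical
  ext x
  simp only [mem_support_iff, coeff_sub, coeff_monomial, Finset.mem_insert, Finset.mem_singleton]
  rcases eq_or_ne a x with rfl | hax
  · simp [Ne.symm hab]
  · rcases eq_or_ne b x with rfl | hbx
    · simp [hax]
    · simp [hax, hbx, Ne.symm hax, Ne.symm hbx]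

lemma mb_ne_zero {g : MvPolynomial (Fin n) k} (h : IsMonomialPoly g ∨ IsBinomialPoly g) :
    g ≠ 0 := by
  rcases h with ⟨a, rfl⟩ | ⟨a, b, hab, rfl⟩
  · simp
  · intro h0
    have := supp_binomial (k := k) hab
    rw [h0] at this
    exact (Finset.insert_ne_empty a {b}) this.symm

variable (r) in
def MBSet (I : Ideal (MvPolynomial (Fin n) k)) : Set (MvPolynomial (Fin n) k) :=
  {g | g ∈ I ∧ (IsMonomialPoly g ∨ IsBinomialPoly g)}

variable (r) in
def LdSet (I : Ideal (MvPolynomial (Fin n) k)) : Set (MvPolynomial (Fin n) k) :=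
  {m | ∃ g ∈ MBSet I, ∃ a, IsLeadExp r g a ∧ m = monomial a 1}

lemma mono_mul_mem_MBSet (I : Ideal (MvPolynomial (Fin n) k)) (u : Fin n →₀ ℕ)
    {y : MvPolynomial (Fin n) k} (hy : y ∈ MBSet I) :
    monomial u 1 * y ∈ MBSet I := by
  refine ⟨Ideal.mul_mem_left I _ hy.1, ?_⟩
  rcases hy.2 with ⟨a, rfl⟩ | ⟨a, b, hab, rfl⟩
  · left
    exact ⟨u + a, by rw [monomial_mul, one_mul]⟩
  · right
    refine ⟨u + a, u + b, by simpa using hab, ?_⟩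
    rw [mul_sub, monomial_mul, monomial_mul, one_mul]

lemma mul_mem_span_MBSet (I : Ideal (MvPolynomial (Fin n) k))
    (p : MvPolynomial (Fin n) k) {x : MvPolynomial (Fin n) k}
    (hx : x ∈ Submodule.span k (MBSet I)) :
    p * x ∈ Submodule.span k (MBSet I) := by
  induction p using MvPolynomial.induction_on' with
  | monomial u c =>
    refine Submodule.span_induction (fun y hy => ?_) (by simp) (fun y z _ _ hy hz => ?_)
      (fun a y _ hy => ?_) hx
    · have : (monomial u c : MvPolynomial (Fin n) k) * y = c • (monomial u 1 * y) := by
        rw [smul_eq_C_mul, ← mul_assoc, ← smul_eq_C_mul, smul_monomial, smul_eq_mul, mul_one]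
      rw [this]
      exact Submodule.smul_mem _ _ (Submodule.subset_span (mono_mul_mem_MBSet I u hy))
    · rw [mul_add]; exact Submodule.add_mem _ hy hz
    · rw [mul_smul_comm]; exact Submodule.smul_mem _ _ hy
  | add p q hp hq =>
    rw [add_mul]; exact Submodule.add_mem _ hp hq

lemma span_F_le (F : Finset (MvPolynomial (Fin n) k))
    (hF : ∀ f ∈ F, IsMonomialPoly f ∨ IsBinomialPoly f)
    {f : MvPolynomial (Fin n) k} (hf : f ∈ Ideal.span (F : Set (MvPolynomial (Fin n) k))) :
    f ∈ Submodule.span k (MBSet (Ideal.span (F : Set (MvPolynomial (Fin n) k)))) := by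
  refine Submodule.span_induction (fun y hy => ?_) (by simp) (fun y z _ _ hy hz => Submodule.add_mem _ hy hz)
    (fun a y _ hy => ?_) hf
  · exact Submodule.subset_span ⟨Ideal.subset_span hy, hF y hy⟩
  · rw [smul_eq_mul]
    exact mul_mem_span_MBSet _ a hy

lemma normal_form {g : MvPolynomial (Fin n) k} (hg : IsMonomialPoly g ∨ IsBinomialPoly g)
    {e : Fin n →₀ ℕ} (he : e ∈ g.support) :
    ∃ (ε : k) (q : MvPolynomial (Fin n) k), (ε = 1 ∨ ε = -1) ∧ g = ε • (monomial e 1 - q) ∧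
      (q = 0 ∨ ∃ v, v ≠ e ∧ v ∈ g.support ∧ q = monomial v 1) := by
  classical
  rcases hg with ⟨a, rfl⟩ | ⟨a, b, hab, rfl⟩
  · have ha : e = a := by
      simpa [support_monomial] using he
    subst ha
    exact ⟨1, 0, Or.inl rfl, by simp, Or.inl rfl⟩
  · rw [supp_binomial hab] at he
    rcases Finset.mem_insert.mp he with rfl | he
    · refine ⟨1, monomial b 1, Or.inl rfl, by simp, Or.inr ⟨b, Ne.symm hab, ?_, rfl⟩⟩
      rw [supp_binomial hab]; simp
    · have hb : e = b := Finset.mem_singleton.mp he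
      subst hb
      refine ⟨-1, monomial a 1, Or.inr rfl, by rw [neg_smul, one_smul, neg_sub], Or.inr ⟨a, hab, ?_, rfl⟩⟩
      rw [supp_binomial hab]; simp

lemma coeff_of_normal {ε : k} {q : MvPolynomial (Fin n) k} {e : Fin n →₀ ℕ}
    (hq : q = 0 ∨ ∃ v, v ≠ e ∧ q = monomial v 1) :
    coeff e (ε • (monomial e 1 - q)) = ε := by
  classical
  have hqe : coeff e q = 0 := by
    rcases hq with rfl | ⟨v, hv, rfl⟩
    · simp
    · simp [coeff_monomial, hv]
  rw [coeff_smul, coeff_sub, hqe, coeff_monomial]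
  simp

lemma sub_lemma (I : Ideal (MvPolynomial (Fin n) k)) {g g0 : MvPolynomial (Fin n) k}
    (hg : g ∈ MBSet I) (hg0 : g0 ∈ MBSet I) {e : Fin n →₀ ℕ}
    (he : e ∈ g.support) (he0 : e ∈ g0.support) :
    g - (coeff e g * coeff e g0) • g0 ∈
      Submodule.span k {p | p ∈ MBSet I ∧
        ∀ b ∈ p.support, (b ∈ g.support ∨ b ∈ g0.support) ∧ b ≠ e} := by
  classical
  obtain ⟨ε, q, hε, hgf, hq⟩ := normal_form hg.2 he
  obtain ⟨ε0, q0, hε0, hg0f, hq0⟩ := normal_form hg0.2 he0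
  have hq' : q = 0 ∨ ∃ v, v ≠ e ∧ q = monomial v 1 := by
    rcases hq with h | ⟨v, hv, _, hqv⟩
    · exact Or.inl h
    · exact Or.inr ⟨v, hv, hqv⟩
  have hq0' : q0 = 0 ∨ ∃ v, v ≠ e ∧ q0 = monomial v 1 := by
    rcases hq0 with h | ⟨v, hv, _, hqv⟩
    · exact Or.inl h
    · exact Or.inr ⟨v, hv, hqv⟩
  have hce : coeff e g = ε := by rw [hgf]; exact coeff_of_normal hq'
  have hce0 : coeff e g0 = ε0 := by rw [hg0f]; exact coeff_of_normal hq0'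
  have hε2 : ε * ε = 1 := by rcases hε with rfl | rfl <;> ring
  have hε02 : ε0 * ε0 = 1 := by rcases hε0 with rfl | rfl <;> ring
  -- the key algebraic identity
  have hkey : g - (coeff e g * coeff e g0) • g0 = ε • (q0 - q) := by
    rw [hce, hce0, hgf, hg0f, smul_smul]
    rw [show ε * ε0 * ε0 = ε from by rw [mul_assoc, hε02, mul_one]]
    rw [← smul_sub]
    congr 1
    ring
  -- membership in the ideal
  have hIsub : g - (coeff e g * coeff e g0) • g0 ∈ I := by
    refine Submodule.sub_mem _ hg.1 ?_
    rw [smul_eq_C_mul]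
    exact Ideal.mul_mem_left I _ hg0.1
  have hdI : q0 - q ∈ I := by
    have : q0 - q = ε • (g - (coeff e g * coeff e g0) • g0) := by
      rw [hkey, smul_smul, hε2, one_smul]
    rw [this, smul_eq_C_mul]
    exact Ideal.mul_mem_left I _ hIsub
  rw [hkey]
  refine Submodule.smul_mem _ _ ?_
  -- now case analysis on the shapes of q, q0
  rcases hq0 with rfl | ⟨v0, hv0, hv0g, rfl⟩
  · rcases hq with rfl | ⟨v, hv, hvg, rfl⟩
    · simp
    · have : (0 : MvPolynomial (Fin n) k) - monomial v 1 = (-1 : k) • monomial v 1 := by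
        rw [neg_smul, one_smul, zero_sub]
      rw [this]
      refine Submodule.smul_mem _ _ (Submodule.subset_span ?_)
      have hmI : (monomial v 1 : MvPolynomial (Fin n) k) ∈ I := by
        have : (monomial v 1 : MvPolynomial (Fin n) k) = (-1 : k) • ((0 : MvPolynomial (Fin n) k) - monomial v 1) := by
          rw [neg_smul, one_smul, zero_sub, neg_neg]
        rw [this, smul_eq_C_mul]
        exact Ideal.mul_mem_left I _ hdI
      refine ⟨⟨hmI, Or.inl ⟨v, rfl⟩⟩, ?_⟩
      intro b hb
      rw [support_monomial, if_neg one_ne_zero] at hb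
      rcases Finset.mem_singleton.mp hb with rfl
      exact ⟨Or.inl hvg, hv⟩
  · rcases hq with rfl | ⟨v, hv, hvg, rfl⟩
    · rw [sub_zero]
      refine Submodule.subset_span ?_
      refine ⟨⟨by rwa [sub_zero] at hdI, Or.inl ⟨v0, rfl⟩⟩, ?_⟩
      intro b hb
      rw [support_monomial, if_neg one_ne_zero] at hb
      rcases Finset.mem_singleton.mp hb with rfl
      exact ⟨Or.inr hv0g, hv0⟩
    · rcases eq_or_ne v0 v with rfl | hne
      · simp
      · refine Submodule.subset_span ?_
        refine ⟨⟨hdI, Or.inr ⟨v0, v, hne, rfl⟩⟩, ?_⟩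
        intro b hb
        rw [supp_binomial hne] at hb
        rcases Finset.mem_insert.mp hb with rfl | hb
        · exact ⟨Or.inr hv0g, hv0⟩
        · rcases Finset.mem_singleton.mp hb with rfl
          exact ⟨Or.inl hvg, hv⟩

lemma keyC (hr : IsMonomialOrder r) (I : Ideal (MvPolynomial (Fin n) k)) (d : Fin n →₀ ℕ) :
    ∀ f a, f ∈ Submodule.span k {p | p ∈ MBSet I ∧ ∀ b ∈ p.support, b = d ∨ r b d} →
      IsLeadExp r f a → monomial a 1 ∈ Ideal.span (LdSet r I) := by
  induction d using WellFounded.induction (mo_wf hr) with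
  | _ d IH =>
  intro f a hf hla
  classical
  obtain ⟨c, hcsupp, hcsum⟩ := Submodule.mem_span_set.mp hf
  set T := c.support with hT
  set U := T.biUnion (fun g => g.support) with hU
  have hTP : ∀ g ∈ T, g ∈ MBSet I ∧ ∀ b ∈ g.support, b = d ∨ r b d := fun g hg => hcsupp hg
  have hsum : f = ∑ g ∈ T, c g • g := hcsum.symm
  have hfU : f.support ⊆ U := by
    intro x hx
    rw [hsum] at hx
    obtain ⟨g, hg, hxg⟩ := Finset.mem_biUnion.mp (MvPolynomial.support_sum hx)
    exact Finset.mem_biUnion.mpr ⟨g, hg, MvPolynomial.support_smul hxg⟩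
  have haU : a ∈ U := hfU hla.1
  obtain ⟨e, heU, hemax⟩ := mo_finset_max hr U ⟨a, haU⟩
  rcases hemax a haU with rfl | hae
  · -- a is the global max: some g0 in T has lead exponent a
    obtain ⟨g0, hg0T, hag0⟩ := Finset.mem_biUnion.mp haU
    refine Ideal.subset_span ⟨g0, (hTP g0 hg0T).1, a, ⟨hag0, ?_⟩, rfl⟩
    intro b hb hbne
    exact (hemax b (Finset.mem_biUnion.mpr ⟨g0, hg0T, hb⟩)).resolve_left hbne
  · -- the global max e is strictly above a : cancellation happens at e
    have hef : coeff e f = 0 := by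
      by_contra h
      have heS : e ∈ f.support := mem_support_iff.mpr h
      have hne : e ≠ a := by rintro rfl; exact hr.1 _ hae
      exact mo_asymm hr hae (hla.2 e heS hne)
    set D := T.filter (fun g => e ∈ g.support) with hD
    have hDsub : D ⊆ T := Finset.filter_subset _ _
    obtain ⟨g1, hg1T, heg1⟩ := Finset.mem_biUnion.mp heU
    have hg0D : g1 ∈ D := Finset.mem_filter.mpr ⟨hg1T, heg1⟩
    set g0 := g1 with hg0def
    have heg0 : e ∈ g0.support := heg1
    -- the coefficients at e cancel
    have hcoeff : ∑ g ∈ D, c g * coeff e g = 0 := by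
      have h1 : coeff e f = ∑ g ∈ T, c g * coeff e g := by
        rw [hsum, coeff_sum]
        exact Finset.sum_congr rfl fun g _ => by rw [coeff_smul, smul_eq_mul]
      have h2 : ∑ g ∈ D, c g * coeff e g = ∑ g ∈ T, c g * coeff e g := by
        refine Finset.sum_subset hDsub fun g hgT hgD => ?_
        have : e ∉ g.support := by
          intro h
          exact hgD (Finset.mem_filter.mpr ⟨hgT, h⟩)
        rw [notMem_support_iff.mp this, mul_zero]
      rw [h2, ← h1, hef]
    -- Q : the new spanning set, supported in U, avoiding e
    set Q : Set (MvPolynomial (Fin n) k) :=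
      {p | p ∈ MBSet I ∧ ∀ b ∈ p.support, b ∈ U ∧ b ≠ e} with hQ
    have hsubQ : ∀ g ∈ D, g - (coeff e g * coeff e g0) • g0 ∈ Submodule.span k Q := by
      intro g hgD
      have hgT : g ∈ T := hDsub hgD
      have hge : e ∈ g.support := (Finset.mem_filter.mp hgD).2
      refine Submodule.span_mono ?_
        (sub_lemma I (hTP g hgT).1 (hTP g0 (hDsub hg0D)).1 hge heg0)
      rintro p ⟨hpP, hpsupp⟩
      refine ⟨hpP, fun b hb => ?_⟩
      obtain ⟨hb1, hb2⟩ := hpsupp b hb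
      refine ⟨?_, hb2⟩
      rcases hb1 with h | h
      · exact Finset.mem_biUnion.mpr ⟨g, hgT, h⟩
      · exact Finset.mem_biUnion.mpr ⟨g0, hDsub hg0D, h⟩
    have hfQ : f ∈ Submodule.span k Q := by
      have hsplit := Finset.sum_filter_add_sum_filter_not T (fun g => e ∈ g.support)
        (fun g => c g • g)
      rw [hsum, ← hsplit]
      refine Submodule.add_mem _ ?_ ?_
      · have hrw : ∑ g ∈ D, c g • g = ∑ g ∈ D, c g • (g - (coeff e g * coeff e g0) • g0) := by
          have h3 : ∑ g ∈ D, c g • (g - (coeff e g * coeff e g0) • g0)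
              = ∑ g ∈ D, c g • g - (∑ g ∈ D, c g * (coeff e g * coeff e g0)) • g0 := by
            rw [Finset.sum_smul, ← Finset.sum_sub_distrib]
            refine Finset.sum_congr rfl fun g hg => ?_
            rw [smul_sub, smul_smul]
          have hz : ∑ g ∈ D, c g * (coeff e g * coeff e g0) = 0 := by
            have h4 : ∑ g ∈ D, c g * (coeff e g * coeff e g0)
                = (∑ g ∈ D, c g * coeff e g) * coeff e g0 := by
              rw [Finset.sum_mul]
              exact Finset.sum_congr rfl fun g _ => by ring
            rw [h4, hcoeff, zero_mul]
          rw [h3, hz, zero_smul, sub_zero]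
        rw [show (Finset.filter (fun g => e ∈ g.support) T) = D from rfl, hrw]
        exact Submodule.sum_mem _ fun g hg => Submodule.smul_mem _ _ (hsubQ g hg)
      · refine Submodule.sum_mem _ fun g hg => ?_
        obtain ⟨hgT, hgne⟩ := Finset.mem_filter.mp hg
        refine Submodule.smul_mem _ _ (Submodule.subset_span ?_)
        refine ⟨(hTP g hgT).1, fun b hb => ⟨Finset.mem_biUnion.mpr ⟨g, hgT, hb⟩, ?_⟩⟩
        rintro rfl
        exact hgne hb
    rcases Finset.eq_empty_or_nonempty (U \ {e}) with hUe | hUe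
    · have hQempty : Q = ∅ := by
        ext p
        simp only [Set.mem_empty_iff_false, iff_false]
        rintro ⟨hpP, hpsupp⟩
        have hpne : p.support.Nonempty := Finset.nonempty_iff_ne_empty.mpr
          (fun h => mb_ne_zero hpP.2 (support_eq_empty.mp h))
        obtain ⟨b, hb⟩ := hpne
        obtain ⟨hb1, hb2⟩ := hpsupp b hb
        have hbm : b ∈ U \ {e} := Finset.mem_sdiff.mpr ⟨hb1, by simpa using hb2⟩
        rw [hUe] at hbm
        simp at hbm
      rw [hQempty, Submodule.span_empty] at hfQ
      have hf0 : f = 0 := by simpa using hfQ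
      rw [hf0] at hla
      simp [IsLeadExp] at hla
    · obtain ⟨e2, he2, hemax2⟩ := mo_finset_max hr _ hUe
      have he2U : e2 ∈ U := (Finset.mem_sdiff.mp he2).1
      have he2ne : e2 ≠ e := by simpa using (Finset.mem_sdiff.mp he2).2
      have hre2e : r e2 e := (hemax e2 he2U).resolve_left he2ne
      have hed : e = d ∨ r e d := by
        obtain ⟨g, hgT, hge⟩ := Finset.mem_biUnion.mp heU
        exact (hTP g hgT).2 e hge
      have hre2d : r e2 d := by
        rcases hed with rfl | h
        · exact hre2e
        · exact hr.2.1 _ _ _ hre2e h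
      refine IH e2 hre2d f a (Submodule.span_mono ?_ hfQ) hla
      rintro p ⟨hpP, hpsupp⟩
      refine ⟨hpP, fun b hb => ?_⟩
      obtain ⟨hb1, hb2⟩ := hpsupp b hb
      exact hemax2 b (Finset.mem_sdiff.mpr ⟨hb1, by simpa using hb2⟩)

lemma key_lemma (hr : IsMonomialOrder r) (F : Finset (MvPolynomial (Fin n) k))
    (hF : ∀ f ∈ F, IsMonomialPoly f ∨ IsBinomialPoly f)
    {f : MvPolynomial (Fin n) k} {a : Fin n →₀ ℕ}
    (hf : f ∈ Ideal.span (F : Set (MvPolynomial (Fin n) k))) (hla : IsLeadExp r f a) :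
    monomial a 1 ∈ Ideal.span (LdSet r (Ideal.span (F : Set (MvPolynomial (Fin n) k)))) := by
  classical
  have hfP := span_F_le F hF hf
  obtain ⟨c, hcsupp, hcsum⟩ := Submodule.mem_span_set.mp hfP
  set T := c.support with hT
  set U := T.biUnion (fun g => g.support) with hU
  have hsum : f = ∑ g ∈ T, c g • g := hcsum.symm
  have hfU : f.support ⊆ U := by
    intro x hx
    rw [hsum] at hx
    obtain ⟨g, hg, hxg⟩ := Finset.mem_biUnion.mp (MvPolynomial.support_sum hx)
    exact Finset.mem_biUnion.mpr ⟨g, hg, MvPolynomial.support_smul hxg⟩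
  have haU : a ∈ U := hfU hla.1
  obtain ⟨e, heU, hemax⟩ := mo_finset_max hr U ⟨a, haU⟩
  refine keyC hr _ e f a ?_ hla
  rw [hsum]
  refine Submodule.sum_mem _ fun g hg => Submodule.smul_mem _ _ (Submodule.subset_span ?_)
  exact ⟨hcsupp hg, fun b hb => hemax b (Finset.mem_biUnion.mpr ⟨g, hg, hb⟩)⟩

end Aux

/-- An ideal generated by monomials and binomials has a Gröbner basis consisting of
monomials and binomials. -/
theorem stmt3 {k : Type*} [Field k] {n : ℕ}
    (r : (Fin n →₀ ℕ) → (Fin n →₀ ℕ) → Prop) (hr : IsMonomialOrder r)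
    (F : Finset (MvPolynomial (Fin n) k))
    (hF : ∀ f ∈ F, IsMonomialPoly f ∨ IsBinomialPoly f) :
    ∃ G : Set (MvPolynomial (Fin n) k), G.Finite ∧
      (∀ g ∈ G, IsMonomialPoly g ∨ IsBinomialPoly g) ∧
      IsGroebnerBasis r (Ideal.span (F : Set (MvPolynomial (Fin n) k))) G := by
  classical
  set I := Ideal.span (F : Set (MvPolynomial (Fin n) k)) with hI
  have hinit : initialIdeal r I = Ideal.span (LdSet r I) := by
    apply le_antisymm
    · rw [initialIdeal, Ideal.span_le]
      rintro m ⟨f, hfI, a, hla, rfl⟩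
      exact key_lemma hr F hF hfI hla
    · rw [Ideal.span_le]
      rintro m ⟨g, hgP, a, hla, rfl⟩
      exact Ideal.subset_span ⟨g, hgP.1, a, hla, rfl⟩
  obtain ⟨s, hs⟩ := IsNoetherian.noetherian (Ideal.span (LdSet r I))
  have hy : ∀ y ∈ s, ∃ Ty : Finset (MvPolynomial (Fin n) k),
      ↑Ty ⊆ LdSet r I ∧ y ∈ Ideal.span (↑Ty : Set (MvPolynomial (Fin n) k)) := by
    intro y hys
    have : y ∈ Ideal.span (LdSet r I) := by rw [← hs]; exact Ideal.subset_span hys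
    exact Submodule.mem_span_finite_of_mem_span this
  choose Ty hTy1 hTy2 using hy
  set T : Finset (MvPolynomial (Fin n) k) := s.attach.biUnion (fun x => Ty x.1 x.2) with hTdef
  have hTL : (T : Set (MvPolynomial (Fin n) k)) ⊆ LdSet r I := by
    intro m hm
    obtain ⟨x, _, hmx⟩ := Finset.mem_biUnion.mp hm
    exact hTy1 x.1 x.2 hmx
  have hspanT : Ideal.span (T : Set (MvPolynomial (Fin n) k)) = Ideal.span (LdSet r I) := by
    apply le_antisymm
    · exact Ideal.span_mono hTL
    · rw [← hs, Submodule.span_le]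
      intro y hys
      have hys' : y ∈ s := hys
      refine Ideal.span_mono ?_ (hTy2 y hys')
      intro m hm
      exact Finset.mem_coe.mpr (Finset.mem_biUnion.mpr ⟨⟨y, hys'⟩, Finset.mem_attach _ _, hm⟩)
  have hTw : ∀ m ∈ T, ∃ g a, g ∈ MBSet I ∧ IsLeadExp r g a ∧ m = monomial a 1 := by
    intro m hm
    obtain ⟨g, hg, a, hla, hma⟩ := hTL hm
    exact ⟨g, a, hg, hla, hma⟩
  choose gw aw hgw1 hgw2 hgw3 using hTw
  refine ⟨Set.range (fun x : {m // m ∈ T} => gw x.1 x.2), Set.finite_range _, ?_, ?_, ?_⟩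
  · rintro g ⟨x, rfl⟩
    exact (hgw1 x.1 x.2).2
  · rintro g ⟨x, rfl⟩
    exact (hgw1 x.1 x.2).1
  · rw [hinit, ← hspanT]
    apply le_antisymm
    · rw [Ideal.span_le]
      intro m hm
      have hm' : m ∈ T := hm
      refine Ideal.subset_span ⟨gw m hm', ⟨⟨m, hm'⟩, rfl⟩, aw m hm', hgw2 m hm', hgw3 m hm'⟩
    · rw [Ideal.span_le]
      rintro m ⟨g, ⟨x, rfl⟩, a, hla, rfl⟩
      have hmem : monomial a 1 ∈ LdSet r I :=
        ⟨gw x.1 x.2, hgw1 x.1 x.2, a, hla, rfl⟩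
      show monomial a 1 ∈ Ideal.span (T : Set (MvPolynomial (Fin n) k))
      rw [hspanT]
      exact Ideal.subset_span hmem
end

section
/- Let Δ be a simplicial complex on [n], and for F ∈ Δ set M_{C_F} = C_F ∩ ℤ^n where C_F is the cone on {e_i : i ∈ F}. The resulting toric face ring is isomorphic as a k-algebra to the Stanley–Reisner ring k[Δ] = k[X_1,...,X_n]/I_Δ, where I_Δ = (∏_{j∈G} X_j : G ⊆ [n], G ∉ Δ). -/
open MvPolynomial

set_option maxHeartbeats 1000000 in
/-- The toric face ring of the monoidal complex associated to a simplicial complex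
`Δ` on `[n]` (with monoids `C_F ∩ ℤⁿ`) is isomorphic, as a `k`-algebra, to the
Stanley–Reisner ring `k[Δ] = k[X₁,…,Xₙ]/I_Δ`. -/
theorem stmt15 {k : Type*} [Field k] {n : ℕ}
    (Δ : Set (Finset (Fin n)))
    (hΔ : ∀ F ∈ Δ, ∀ G : Finset (Fin n), G ⊆ F → G ∈ Δ) (h0 : ∅ ∈ Δ)
    (R : Type*) [CommRing R] [Algebra k R]
    (supp : Set (Fin n → ℕ))
    (hsupp : supp = {a | ∃ F ∈ Δ, ∀ i, a i ≠ 0 → i ∈ F})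
    (t : (Fin n → ℕ) → R)
    (hone : t 0 = 1)
    (hli : LinearIndependent k (fun a : supp => t a))
    (hspan : Submodule.span k (t '' supp) = ⊤)
    (hmul : ∀ a ∈ supp, ∀ b ∈ supp,
      (∃ F ∈ Δ, (∀ i, a i ≠ 0 → i ∈ F) ∧ (∀ i, b i ≠ 0 → i ∈ F)) →
        t a * t b = t (a + b))
    (hmul0 : ∀ a ∈ supp, ∀ b ∈ supp,
      (¬ ∃ F ∈ Δ, (∀ i, a i ≠ 0 → i ∈ F) ∧ (∀ i, b i ≠ 0 → i ∈ F)) →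
        t a * t b = 0) :
    Nonempty (R ≃ₐ[k]
      (MvPolynomial (Fin n) k ⧸
        Ideal.span {m : MvPolynomial (Fin n) k |
          ∃ G : Finset (Fin n), G ∉ Δ ∧ m = ∏ j ∈ G, MvPolynomial.X j})) := by
  classical
  set I : Ideal (MvPolynomial (Fin n) k) :=
    Ideal.span {m : MvPolynomial (Fin n) k |
      ∃ G : Finset (Fin n), G ∉ Δ ∧ m = ∏ j ∈ G, MvPolynomial.X j} with hI
  set x : Fin n → R := fun i => if ({i} : Finset (Fin n)) ∈ Δ then t (Pi.single i 1) else 0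
    with hx
  -- membership of Pi.single in supp
  have hsingle_supp : ∀ i : Fin n, ({i} : Finset (Fin n)) ∈ Δ → (Pi.single i 1 : Fin n → ℕ) ∈ supp := by
    intro i hi
    rw [hsupp]
    refine ⟨{i}, hi, fun j hj => ?_⟩
    by_contra hji
    simp only [Finset.mem_singleton] at hji
    rw [Pi.single_apply, if_neg hji] at hj
    exact hj rfl
  -- Lemma A
  have lemA : ∀ N (a : Fin n → ℕ), (∑ i, a i) ≤ N → a ∈ supp → ∏ i, x i ^ a i = t a := by
    intro N
    induction N with
    | zero =>
      intro a hsum ha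
      have h0a : a = 0 := by
        funext i
        have := Finset.sum_eq_zero_iff.mp (Nat.le_zero.mp hsum) i (Finset.mem_univ i)
        simpa using this
      subst h0a
      simp [hone]
    | succ N ih =>
      intro a hsum ha
      have ha' := ha
      rw [hsupp] at ha'
      obtain ⟨F, hF, hFa⟩ := ha'
      by_cases h0a : a = 0
      · subst h0a; simp [hone]
      · obtain ⟨i0, hi0⟩ : ∃ i0, a i0 ≠ 0 := by
          by_contra hc
          push_neg at hc
          exact h0a (funext fun i => hc i)
        set a' : Fin n → ℕ := a - Pi.single i0 1 with ha'def
        have hdec : a = Pi.single i0 1 + a' := by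
          funext j
          by_cases hj : j = i0
          · subst hj
            simp only [ha'def, Pi.add_apply, Pi.sub_apply, Pi.single_eq_same]
            omega
          · simp only [ha'def, Pi.add_apply, Pi.sub_apply, Pi.single_apply, if_neg hj]
            omega
        have ha'supp : a' ∈ supp := by
          rw [hsupp]
          refine ⟨F, hF, fun j hj => ?_⟩
          apply hFa
          intro haj
          apply hj
          simp only [ha'def, Pi.sub_apply, haj]
          omega
        have hsum' : ∑ i, a' i ≤ N := by
          have h1 : ∑ i, a i = (∑ i, (Pi.single i0 1 : Fin n → ℕ) i) + ∑ i, a' i := by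
            rw [hdec]; rw [← Finset.sum_add_distrib]; rfl
          have h2 : ∑ i, (Pi.single i0 1 : Fin n → ℕ) i = 1 := by
            rw [Finset.sum_eq_single i0]
            · simp
            · intro j _ hj; simp [Pi.single_apply, hj]
            · intro h; exact absurd (Finset.mem_univ i0) h
          omega
        have hprodsplit : ∏ i, x i ^ a i = x i0 * ∏ i, x i ^ a' i := by
          have : ∀ i, x i ^ a i = x i ^ (Pi.single i0 1 : Fin n → ℕ) i * x i ^ a' i := by
            intro i
            rw [← pow_add]
            congr 1
            rw [hdec]; rfl
          rw [Finset.prod_congr rfl (fun i _ => this i), Finset.prod_mul_distrib]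
          congr 1
          rw [Finset.prod_eq_single i0]
          · simp
          · intro j _ hj; simp [Pi.single_apply, hj]
          · intro h; exact absurd (Finset.mem_univ i0) h
        have hi0F : i0 ∈ F := hFa i0 hi0
        have hi0Δ : ({i0} : Finset (Fin n)) ∈ Δ := hΔ F hF {i0} (by simpa using hi0F)
        have hxi0 : x i0 = t (Pi.single i0 1) := by rw [hx]; simp [hi0Δ]
        have hsingF : ∀ j, (Pi.single i0 1 : Fin n → ℕ) j ≠ 0 → j ∈ F := by
          intro j hj
          by_cases hji : j = i0
          · subst hji; exact hi0F
          · rw [Pi.single_apply, if_neg hji] at hj; exact absurd rfl hj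
        have ha'F : ∀ j, a' j ≠ 0 → j ∈ F := by
          intro j hj
          apply hFa
          intro haj
          apply hj
          simp only [ha'def, Pi.sub_apply, haj]
          omega
        rw [hprodsplit, ih a' hsum' ha'supp, hxi0,
          hmul _ (hsingle_supp i0 hi0Δ) _ ha'supp ⟨F, hF, hsingF, ha'F⟩, ← hdec]
  -- Lemma C : products of x over non-faces vanish
  have lemC : ∀ N (G : Finset (Fin n)), G.card ≤ N → G ∉ Δ → ∏ j ∈ G, x j = 0 := by
    intro N
    induction N with
    | zero =>
      intro G hcard hG
      have : G = ∅ := Finset.card_eq_zero.mp (Nat.le_zero.mp hcard)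
      subst this
      exact absurd h0 hG
    | succ N ih =>
      intro G hcard hG
      by_cases hsing : ∃ j ∈ G, ({j} : Finset (Fin n)) ∉ Δ
      · obtain ⟨j, hj, hjΔ⟩ := hsing
        apply Finset.prod_eq_zero hj
        rw [hx]
        simp [hjΔ]
      · push_neg at hsing
        have hGne : G ≠ ∅ := by rintro rfl; exact hG h0
        obtain ⟨j0, hj0⟩ := Finset.nonempty_iff_ne_empty.mpr hGne
        set G' := G.erase j0 with hG'def
        have hsplit : ∏ j ∈ G, x j = x j0 * ∏ j ∈ G', x j := (Finset.mul_prod_erase G x hj0).symm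
        by_cases hG' : G' ∈ Δ
        · -- G' is a face; use hmul0
          set aG : Fin n → ℕ := fun i => if i ∈ G' then 1 else 0 with haG
          have haGsupp : aG ∈ supp := by
            rw [hsupp]
            refine ⟨G', hG', fun i hi => ?_⟩
            by_contra hiG
            simp [haG, hiG] at hi
          have hprodG' : ∏ j ∈ G', x j = t aG := by
            rw [← lemA (∑ i, aG i) aG le_rfl haGsupp]
            rw [Finset.prod_congr rfl (fun i _ => show x i ^ aG i = if i ∈ G' then x i else 1 from by
              by_cases hi : i ∈ G' <;> simp [haG, hi])]
            rw [Finset.prod_ite_mem, Finset.univ_inter]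
          have hj0Δ : ({j0} : Finset (Fin n)) ∈ Δ := hsing j0 hj0
          have hxj0 : x j0 = t (Pi.single j0 1) := by rw [hx]; simp [hj0Δ]
          have hnoF : ¬ ∃ F ∈ Δ, (∀ i, (Pi.single j0 1 : Fin n → ℕ) i ≠ 0 → i ∈ F) ∧
              (∀ i, aG i ≠ 0 → i ∈ F) := by
            rintro ⟨F, hF, h1, h2⟩
            apply hG
            apply hΔ F hF
            intro i hi
            by_cases hij : i = j0
            · subst hij; exact h1 i (by simp)
            · exact h2 i (by simp [haG, hG'def, Finset.mem_erase, hij, hi])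
          rw [hsplit, hprodG', hxj0,
            hmul0 _ (hsingle_supp j0 hj0Δ) _ haGsupp hnoF]
        · have hcard' : G'.card ≤ N := by
            rw [hG'def, Finset.card_erase_of_mem hj0]
            omega
          rw [hsplit, ih G' hcard' hG', mul_zero]
  -- the algebra map from the polynomial ring
  set φ : MvPolynomial (Fin n) k →ₐ[k] R := MvPolynomial.aeval x with hφ
  have hφmon : ∀ d : Fin n →₀ ℕ, φ (monomial d 1) = ∏ i, x i ^ d i := by
    intro d
    rw [hφ, aeval_monomial, map_one, one_mul, Finsupp.prod]
    refine Finset.prod_subset (Finset.subset_univ _) ?_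
    intro i _ hi
    rw [Finsupp.notMem_support_iff.mp hi, pow_zero]
  have hXprod : ∀ G : Finset (Fin n), φ (∏ j ∈ G, X j) = ∏ j ∈ G, x j := by
    intro G
    rw [map_prod]
    exact Finset.prod_congr rfl fun j _ => by rw [hφ, aeval_X]
  have hIker : ∀ p ∈ I, φ p = 0 := by
    intro p hp
    have hle : I ≤ RingHom.ker (φ : MvPolynomial (Fin n) k →+* R) := by
      rw [hI, Ideal.span_le]
      rintro m ⟨G, hG, rfl⟩
      rw [SetLike.mem_coe, RingHom.mem_ker]
      rw [show ((φ : MvPolynomial (Fin n) k →+* R) (∏ j ∈ G, X j)) = φ (∏ j ∈ G, X j) from rfl,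
        hXprod]
      exact lemC G.card G le_rfl hG
    exact hle hp
  set φb : (MvPolynomial (Fin n) k ⧸ I) →ₐ[k] R := Ideal.Quotient.liftₐ I φ hIker with hφb
  have hφbmk : ∀ p : MvPolynomial (Fin n) k, φb (Ideal.Quotient.mk I p) = φ p := by
    intro p
    rw [hφb, Ideal.Quotient.liftₐ_apply]
    rfl
  -- the prod-of-X = monomial lemma
  have hprodX : ∀ G : Finset (Fin n),
      (∏ j ∈ G, (X j : MvPolynomial (Fin n) k)) = monomial (∑ j ∈ G, Finsupp.single j 1) 1 := by
    intro G
    induction G using Finset.induction_on with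
    | empty => simp
    | insert _ _ h ih => rw [Finset.prod_insert h, Finset.sum_insert h, ih, X, monomial_mul, one_mul]
  -- bad monomials die in the quotient
  have hbad : ∀ d : Fin n →₀ ℕ, (⇑d : Fin n → ℕ) ∉ supp →
      Ideal.Quotient.mk I (monomial d 1) = 0 := by
    intro d hd
    set G := d.support with hGd
    have hGΔ : G ∉ Δ := by
      intro hGmem
      apply hd
      rw [hsupp]
      exact ⟨G, hGmem, fun i hi => Finsupp.mem_support_iff.mpr hi⟩
    set u : Fin n →₀ ℕ := ∑ j ∈ G, Finsupp.single j 1 with hu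
    have hui : ∀ i, u i = if i ∈ G then 1 else 0 := by
      intro i
      rw [hu, Finset.sum_apply']
      simp only [Finsupp.single_apply]
      rw [Finset.sum_ite_eq' G i (fun _ => 1)]
    have hud : u + (d - u) = d := by
      ext i
      have h1 : u i ≤ d i := by
        rw [hui]
        by_cases hi : i ∈ G
        · rw [if_pos hi]
          have := Finsupp.mem_support_iff.mp (hGd ▸ hi)
          omega
        · rw [if_neg hi]; omega
      rw [Finsupp.add_apply, Finsupp.tsub_apply]
      omega
    have hmono : monomial d 1 = (∏ j ∈ G, (X j : MvPolynomial (Fin n) k)) * monomial (d - u) 1 := by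
      rw [hprodX, ← hu, monomial_mul, one_mul, hud]
    rw [hmono, map_mul]
    have : Ideal.Quotient.mk I (∏ j ∈ G, (X j : MvPolynomial (Fin n) k)) = 0 := by
      rw [Ideal.Quotient.eq_zero_iff_mem, hI]
      exact Ideal.subset_span ⟨G, hGΔ, rfl⟩
    rw [this, zero_mul]
  -- key computation: φb of a good monomial
  have hgood : ∀ d : Fin n →₀ ℕ, (⇑d : Fin n → ℕ) ∈ supp →
      φb (Ideal.Quotient.mk I (monomial d 1)) = t ⇑d := by
    intro d hd
    rw [hφbmk, hφmon]
    exact lemA (∑ i, d i) ⇑d le_rfl hd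
  -- surjectivity
  have hsurj : Function.Surjective φb := by
    intro r
    have hr : r ∈ Submodule.span k (t '' supp) := by rw [hspan]; trivial
    have hle : Submodule.span k (t '' supp) ≤ Subalgebra.toSubmodule φb.range := by
      rw [Submodule.span_le]
      rintro _ ⟨a, ha, rfl⟩
      have hcoe : (⇑(Finsupp.equivFunOnFinite.symm a) : Fin n → ℕ) = a := Finsupp.equivFunOnFinite.apply_symm_apply a
      refine ⟨Ideal.Quotient.mk I (monomial (Finsupp.equivFunOnFinite.symm a) 1), ?_⟩
      show φb _ = t a
      rw [hgood _ (hcoe ▸ ha), hcoe]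
    obtain ⟨q, hq⟩ := hle hr
    exact ⟨q, hq⟩
  -- basis of R built from t
  have hspan' : ⊤ ≤ Submodule.span k (Set.range fun a : supp => t a) := by
    rw [← Set.image_eq_range, hspan]
  set B : Module.Basis supp k R := Module.Basis.mk hli hspan' with hB
  set σ : R →ₗ[k] (MvPolynomial (Fin n) k ⧸ I) :=
    B.constr k (fun a => Ideal.Quotient.mk I (monomial (Finsupp.equivFunOnFinite.symm (a : Fin n → ℕ)) 1)) with hσ
  clear_value x φ φb B σ I
  have hleft : ∀ q : MvPolynomial (Fin n) k ⧸ I, σ (φb q) = q := by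
    intro q
    obtain ⟨p, rfl⟩ := Ideal.Quotient.mk_surjective q
    induction p using MvPolynomial.induction_on' with
    | monomial d c =>
      have hc : (monomial d c : MvPolynomial (Fin n) k) = c • monomial d 1 := by
        rw [smul_monomial, smul_eq_mul, mul_one]
      have hmks : Ideal.Quotient.mk I (c • monomial d 1) =
          c • Ideal.Quotient.mk I (monomial d 1) :=
        map_smul (Ideal.Quotient.mkₐ k I) c (monomial d 1)
      rw [hc, hmks, map_smul, map_smul]
      congr 1
      by_cases hd : (⇑d : Fin n → ℕ) ∈ supp
      · rw [hgood d hd]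
        have : t ⇑d = B ⟨⇑d, hd⟩ := by rw [hB, Module.Basis.mk_apply]
        rw [this, hσ, Module.Basis.constr_basis]
        congr 1
        simp
      · rw [hbad d hd, map_zero, map_zero]
    | add p1 p2 ih1 ih2 =>
      have hmka : Ideal.Quotient.mk I (p1 + p2) =
          Ideal.Quotient.mk I p1 + Ideal.Quotient.mk I p2 := map_add (Ideal.Quotient.mk I) p1 p2
      rw [hmka, map_add φb, map_add σ, ih1, ih2]
  have hinj : Function.Injective φb := Function.LeftInverse.injective hleft
  exact ⟨(AlgEquiv.ofBijective φb ⟨hinj, hsurj⟩).symm⟩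
end

section
/- Let S = k[X_1,...,X_6] and I = (X_1X_2 − X_6^2, X_2X_3 − X_4^2, X_3X_1 − X_5^2, X_1X_4, X_2X_5, X_3X_6, X_4X_5, X_4X_6, X_5X_6). In R = S/I, the annihilator of X_1 is the ideal generated by X_4: (0 :_R X_1) = (X_4), and the annihilator of X_4 is (0 :_R X_4) = (X_1, X_5, X_6). -/
set_option synthInstance.maxHeartbeats 400000
set_option maxHeartbeats 1000000

open MvPolynomial

lemma vec_five18 {α : Type*} (a b c d e f : α) : ![a,b,c,d,e,f] 5 = f := rfl

section Aux

variable {k : Type*} [Field k]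

lemma primeX18 {n : ℕ} (a : Fin (n+1)) : Prime (X a : MvPolynomial (Fin (n+1)) k) := by
  rw [← MulEquiv.prime_iff ((renameEquiv k (finSuccEquiv' a)).trans (optionEquivLeft k (Fin n))).toMulEquiv]
  have h : ((renameEquiv k (finSuccEquiv' a)).trans (optionEquivLeft k (Fin n))).toMulEquiv (X a)
      = Polynomial.X := by simp [finSuccEquiv'_at]
  rw [h]; exact Polynomial.prime_X

lemma not_X_dvd_X18 {n : ℕ} {a b : Fin n} (hab : a ≠ b) :
    ¬ (X a : MvPolynomial (Fin n) k) ∣ X b := by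
  intro ⟨c, hc⟩
  have h := congrArg (aeval (fun t => if t = a then (0:k) else 1)) hc
  simp [aeval_X] at h
  exact hab h.symm

lemma irr_quad18 {n : ℕ} (a b : Fin (n+1)) (hab : a ≠ b) :
    Irreducible (Polynomial.X ^ 2 - Polynomial.C (X a * X b) :
      Polynomial (MvPolynomial (Fin (n+1)) k)) := by
  set A := MvPolynomial (Fin (n+1)) k
  have hc0 : (Polynomial.X ^ 2 - Polynomial.C (X a * X b) : Polynomial A).coeff 0
      = -(X a * X b) := by simp
  have hmon : (Polynomial.X ^ 2 - Polynomial.C (X a * X b) : Polynomial A).Monic :=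
    Polynomial.monic_X_pow_sub_C _ two_ne_zero
  have hPprime : (Ideal.span {(X a : A)}).IsPrime :=
    (Ideal.span_singleton_prime (X_ne_zero a)).mpr (primeX18 a)
  refine Polynomial.irreducible_of_eisenstein_criterion hPprime ?_ ?_ ?_ ?_ ?_
  · rw [hmon.leadingCoeff]
    intro h
    exact hPprime.ne_top (Ideal.eq_top_of_isUnit_mem _ h isUnit_one)
  · intro m hm
    rw [Polynomial.degree_X_pow_sub_C (by norm_num) _] at hm
    have hm2 : m < 2 := by exact_mod_cast hm
    interval_cases m
    · rw [hc0]
      exact neg_mem (Ideal.mem_span_singleton.mpr (dvd_mul_right _ _))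
    · simp [Polynomial.coeff_X_pow]
  · rw [Polynomial.degree_X_pow_sub_C (by norm_num) _]; norm_num
  · rw [hc0, Ideal.span_singleton_pow, Ideal.neg_mem_iff, Ideal.mem_span_singleton, sq]
    intro hdvd
    exact not_X_dvd_X18 hab ((mul_dvd_mul_iff_left (X_ne_zero a)).mp hdvd)
  · exact hmon.isPrimitive

lemma prime_quad18 {n : ℕ} (l : Fin (n+2)) (a b : Fin (n+1)) (hab : a ≠ b) :
    Prime (X (l.succAbove a) * X (l.succAbove b) - X l ^ 2 : MvPolynomial (Fin (n+2)) k) := by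
  rw [← MulEquiv.prime_iff ((renameEquiv k (finSuccEquiv' l)).trans
    (optionEquivLeft k (Fin (n+1)))).toMulEquiv]
  have h : ((renameEquiv k (finSuccEquiv' l)).trans (optionEquivLeft k (Fin (n+1)))).toMulEquiv
      (X (l.succAbove a) * X (l.succAbove b) - X l ^ 2)
      = -(Polynomial.X ^ 2 - Polynomial.C (X a * X b)) := by
    simp [map_sub, map_mul, map_pow, finSuccEquiv'_succAbove, finSuccEquiv'_at]
  rw [h]
  exact (UniqueFactorizationMonoid.irreducible_iff_prime.mp (irr_quad18 a b hab)).neg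

lemma prime_q118 : Prime (X 0 * X 1 - X 5 ^ 2 : MvPolynomial (Fin 6) k) :=
  prime_quad18 (n := 4) 5 0 1 (by decide)

lemma prime_q218 : Prime (X 2 * X 0 - X 4 ^ 2 : MvPolynomial (Fin 6) k) :=
  prime_quad18 (n := 4) 4 2 0 (by decide)

lemma prime_q318 : Prime (X 1 * X 2 - X 3 ^ 2 : MvPolynomial (Fin 6) k) :=
  prime_quad18 (n := 4) 3 1 2 (by decide)

lemma quad_not_dvd_X18 {q : MvPolynomial (Fin 6) k} (i : Fin 6)
    (hq : aeval (R := k) (fun _ => (1:k)) q = 0) : ¬ q ∣ (X i : MvPolynomial (Fin 6) k) := by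
  intro ⟨c, hc⟩
  have h := congrArg (aeval (R := k) (fun _ => (1:k))) hc
  rw [map_mul, hq, zero_mul, aeval_X] at h
  exact one_ne_zero h

lemma mk_aeval_eq18 {J : Ideal (MvPolynomial (Fin 6) k)} {v : Fin 6 → MvPolynomial (Fin 6) k}
    (hv : ∀ i, Ideal.Quotient.mk J (v i) = Ideal.Quotient.mk J (X i))
    (f : MvPolynomial (Fin 6) k) :
    Ideal.Quotient.mk J (aeval v f) = Ideal.Quotient.mk J f := by
  induction f using MvPolynomial.induction_on with
  | C a => simp [aeval_C, algebraMap_eq]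
  | add f g hf hg => rw [map_add, map_add, hf, hg, map_add]
  | mul_X f i hf => simp only [map_mul, aeval_X, hf, hv]

lemma sub_aeval_mem18 {J : Ideal (MvPolynomial (Fin 6) k)} {v : Fin 6 → MvPolynomial (Fin 6) k}
    (hv : ∀ i, Ideal.Quotient.mk J (v i) = Ideal.Quotient.mk J (X i))
    (f : MvPolynomial (Fin 6) k) : f - aeval v f ∈ J := by
  rw [← Ideal.Quotient.eq_zero_iff_mem, map_sub, mk_aeval_eq18 hv, sub_self]

lemma aeval_span_le18 {v : Fin 6 → MvPolynomial (Fin 6) k} {G : Set (MvPolynomial (Fin 6) k)}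
    {J : Ideal (MvPolynomial (Fin 6) k)} (hG : ∀ g ∈ G, aeval v g ∈ J) :
    ∀ f ∈ Ideal.span G, aeval v f ∈ J := by
  intro f hf
  have h2 : Ideal.map (aeval v) (Ideal.span G) ≤ J := by
    rw [Ideal.map_span]
    exact Ideal.span_le.mpr (by rintro y ⟨g, hg, rfl⟩; exact hG g hg)
  exact h2 (Ideal.mem_map_of_mem _ hf)

/-- annihilator of X 3 -/
lemma ann_X318 (g : MvPolynomial (Fin 6) k)
    (hg : X 3 * g ∈ Ideal.span
      {X 0 * X 1 - X 5 ^ 2, X 1 * X 2 - X 3 ^ 2, X 2 * X 0 - X 4 ^ 2,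
       X 0 * X 3, X 1 * X 4, X 2 * X 5, X 3 * X 4, X 3 * X 5, X 4 * X 5}) :
    g ∈ Ideal.span
      {X 0 * X 1 - X 5 ^ 2, X 1 * X 2 - X 3 ^ 2, X 2 * X 0 - X 4 ^ 2,
       X 0 * X 3, X 1 * X 4, X 2 * X 5, X 3 * X 4, X 3 * X 5, X 4 * X 5} ⊔
      Ideal.span {(X 0 : MvPolynomial (Fin 6) k), X 4, X 5} := by
  set h : MvPolynomial (Fin 6) k := aeval (R := k) (![0, X 1, X 2, X 3, 0, 0] : Fin 6 → MvPolynomial (Fin 6) k) g with hdef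
  have hP : X 3 * h ∈ Ideal.span {X 1 * X 2 - X 3 ^ 2} := by
    have h1 := aeval_span_le18 (v := (![0, X 1, X 2, X 3, 0, 0] : Fin 6 → MvPolynomial (Fin 6) k))
      (J := Ideal.span {X 1 * X 2 - X 3 ^ 2}) ?_ _ hg
    · rw [map_mul] at h1
      have h2 : aeval (R := k) (![0, X 1, X 2, X 3, 0, 0] : Fin 6 → MvPolynomial (Fin 6) k) (X 3) = X 3 := by simp
      rwa [h2] at h1
    · intro p hp
      simp only [Set.mem_insert_iff, Set.mem_singleton_iff] at hp
      rcases hp with rfl | rfl | rfl | rfl | rfl | rfl | rfl | rfl | rfl <;>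
        simp [vec_five18, Ideal.mem_span_singleton]
  have hq := prime_q318 (k := k)
  have hdvd := Ideal.mem_span_singleton.mp hP
  have hnd : ¬ (X 1 * X 2 - X 3 ^ 2 : MvPolynomial (Fin 6) k) ∣ X 3 :=
    quad_not_dvd_X18 3 (by simp)
  have hh : h ∈ Ideal.span {X 1 * X 2 - X 3 ^ 2} :=
    Ideal.mem_span_singleton.mpr ((hq.2.2 _ _ hdvd).resolve_left hnd)
  have hgh : g - h ∈ Ideal.span {(X 0 : MvPolynomial (Fin 6) k), X 4, X 5} := by
    refine sub_aeval_mem18 ?_ g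
    intro i
    rw [Ideal.Quotient.eq]
    fin_cases i <;> simp [vec_five18] <;> exact Ideal.subset_span (by simp)
  have heq : g = h + (g - h) := by ring
  rw [heq]
  refine Submodule.add_mem_sup ?_ hgh
  exact Ideal.span_mono (by simp) hh

/-- annihilator of X 0 -/
lemma ann_X018 (g : MvPolynomial (Fin 6) k)
    (hg : X 0 * g ∈ Ideal.span
      {X 0 * X 1 - X 5 ^ 2, X 1 * X 2 - X 3 ^ 2, X 2 * X 0 - X 4 ^ 2,
       X 0 * X 3, X 1 * X 4, X 2 * X 5, X 3 * X 4, X 3 * X 5, X 4 * X 5}) :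
    g ∈ Ideal.span
      {X 0 * X 1 - X 5 ^ 2, X 1 * X 2 - X 3 ^ 2, X 2 * X 0 - X 4 ^ 2,
       X 0 * X 3, X 1 * X 4, X 2 * X 5, X 3 * X 4, X 3 * X 5, X 4 * X 5} ⊔
      Ideal.span {(X 3 : MvPolynomial (Fin 6) k)} := by
  have hI1le : Ideal.span
      {X 0 * X 1 - X 5 ^ 2, X 1 * X 2, X 2 * X 0 - X 4 ^ 2,
       X 1 * X 4, X 2 * X 5, X 4 * X 5} ≤ Ideal.span
      {X 0 * X 1 - X 5 ^ 2, X 1 * X 2 - X 3 ^ 2, X 2 * X 0 - X 4 ^ 2,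
       X 0 * X 3, X 1 * X 4, X 2 * X 5, X 3 * X 4, X 3 * X 5, X 4 * X 5} ⊔
      Ideal.span {(X 3 : MvPolynomial (Fin 6) k)} := by
    rw [Ideal.span_le]
    intro p hp
    simp only [Set.mem_insert_iff, Set.mem_singleton_iff] at hp
    rcases hp with rfl | rfl | rfl | rfl | rfl | rfl
    · exact Submodule.mem_sup_left (Ideal.subset_span (by simp))
    · have hmem2 := Submodule.add_mem_sup (S := Ideal.span
          {X 0 * X 1 - X 5 ^ 2, X 1 * X 2 - X 3 ^ 2, X 2 * X 0 - X 4 ^ 2,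
           X 0 * X 3, X 1 * X 4, X 2 * X 5, X 3 * X 4, X 3 * X 5, X 4 * X 5})
          (T := Ideal.span {(X 3 : MvPolynomial (Fin 6) k)})
          (Ideal.subset_span (by simp : (X 1 * X 2 - X 3 ^ 2 : MvPolynomial (Fin 6) k) ∈ _))
          (Ideal.mem_span_singleton.mpr ⟨X 3, rfl⟩)
      rwa [show (X 1 * X 2 - X 3 ^ 2) + X 3 * X 3 = (X 1 * X 2 : MvPolynomial (Fin 6) k)
        from by ring] at hmem2
    · exact Submodule.mem_sup_left (Ideal.subset_span (by simp))
    · exact Submodule.mem_sup_left (Ideal.subset_span (by simp))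
    · exact Submodule.mem_sup_left (Ideal.subset_span (by simp))
    · exact Submodule.mem_sup_left (Ideal.subset_span (by simp))
  -- specialize X 3 to 0
  set h : MvPolynomial (Fin 6) k := aeval (R := k) (![X 0, X 1, X 2, 0, X 4, X 5] : Fin 6 → MvPolynomial (Fin 6) k) g with hdef
  have hX0h : X 0 * h ∈ Ideal.span
      {X 0 * X 1 - X 5 ^ 2, X 1 * X 2, X 2 * X 0 - X 4 ^ 2,
       X 1 * X 4, X 2 * X 5, X 4 * X 5} := by
    have h1 := aeval_span_le18 (v := (![X 0, X 1, X 2, 0, X 4, X 5] : Fin 6 → MvPolynomial (Fin 6) k))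
      (J := Ideal.span {X 0 * X 1 - X 5 ^ 2, X 1 * X 2, X 2 * X 0 - X 4 ^ 2,
        X 1 * X 4, X 2 * X 5, X 4 * X 5}) ?_ _ hg
    · rw [map_mul] at h1
      have h2 : aeval (R := k) (![X 0, X 1, X 2, 0, X 4, X 5] : Fin 6 → MvPolynomial (Fin 6) k) (X 0) = X 0 := by simp
      rwa [h2] at h1
    · intro p hp
      simp only [Set.mem_insert_iff, Set.mem_singleton_iff] at hp
      rcases hp with rfl | rfl | rfl | rfl | rfl | rfl | rfl | rfl | rfl <;>
        · simp [vec_five18]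
          try exact Ideal.subset_span (by simp)
  -- first prime cancellation
  set h1 : MvPolynomial (Fin 6) k :=
    aeval (R := k) (![X 0, X 1, 0, X 3, 0, X 5] : Fin 6 → MvPolynomial (Fin 6) k) h with h1def
  have htau1 : ∀ f ∈ Ideal.span
      {X 0 * X 1 - X 5 ^ 2, X 1 * X 2, X 2 * X 0 - X 4 ^ 2,
       X 1 * X 4, X 2 * X 5, X 4 * X 5},
      aeval (R := k) (![X 0, X 1, 0, X 3, 0, X 5] : Fin 6 → MvPolynomial (Fin 6) k) f ∈
      Ideal.span {(X 0 * X 1 - X 5 ^ 2 : MvPolynomial (Fin 6) k)} := by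
    refine aeval_span_le18 ?_
    intro p hp
    simp only [Set.mem_insert_iff, Set.mem_singleton_iff] at hp
    rcases hp with rfl | rfl | rfl | rfl | rfl | rfl <;>
      simp [vec_five18, Ideal.mem_span_singleton]
  have hX0h1 : X 0 * h1 ∈ Ideal.span {(X 0 * X 1 - X 5 ^ 2 : MvPolynomial (Fin 6) k)} := by
    have h2 := htau1 _ hX0h
    rw [map_mul] at h2
    have h3 : aeval (R := k) (![X 0, X 1, 0, X 3, 0, X 5] : Fin 6 → MvPolynomial (Fin 6) k) (X 0) = X 0 := by simp
    rwa [h3] at h2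
  have hh1 : h1 ∈ Ideal.span {(X 0 * X 1 - X 5 ^ 2 : MvPolynomial (Fin 6) k)} :=
    Ideal.mem_span_singleton.mpr
      (((prime_q118 (k := k)).2.2 _ _ (Ideal.mem_span_singleton.mp hX0h1)).resolve_left
        (quad_not_dvd_X18 0 (by simp)))
  have hh1I1 : h1 ∈ Ideal.span
      {X 0 * X 1 - X 5 ^ 2, X 1 * X 2, X 2 * X 0 - X 4 ^ 2,
       X 1 * X 4, X 2 * X 5, X 4 * X 5} := Ideal.span_mono (by simp) hh1
  -- r := h - h1
  have hr24 : h - h1 ∈ Ideal.span {(X 2 : MvPolynomial (Fin 6) k), X 4} := by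
    refine sub_aeval_mem18 ?_ h
    intro i
    rw [Ideal.Quotient.eq]
    fin_cases i <;> simp [vec_five18] <;> exact Ideal.subset_span (by simp)
  have hX0r : X 0 * (h - h1) ∈ Ideal.span
      {X 0 * X 1 - X 5 ^ 2, X 1 * X 2, X 2 * X 0 - X 4 ^ 2,
       X 1 * X 4, X 2 * X 5, X 4 * X 5} := by
    rw [mul_sub]
    exact sub_mem hX0h (Ideal.span_mono (by simp) hX0h1)
  -- second prime cancellation
  set s : MvPolynomial (Fin 6) k :=
    aeval (R := k) (![X 0, 0, X 2, X 3, X 4, 0] : Fin 6 → MvPolynomial (Fin 6) k) (h - h1) with hsdef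
  have htau2 : ∀ f ∈ Ideal.span
      {X 0 * X 1 - X 5 ^ 2, X 1 * X 2, X 2 * X 0 - X 4 ^ 2,
       X 1 * X 4, X 2 * X 5, X 4 * X 5},
      aeval (R := k) (![X 0, 0, X 2, X 3, X 4, 0] : Fin 6 → MvPolynomial (Fin 6) k) f ∈
      Ideal.span {(X 2 * X 0 - X 4 ^ 2 : MvPolynomial (Fin 6) k)} := by
    refine aeval_span_le18 ?_
    intro p hp
    simp only [Set.mem_insert_iff, Set.mem_singleton_iff] at hp
    rcases hp with rfl | rfl | rfl | rfl | rfl | rfl <;>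
      simp [vec_five18, Ideal.mem_span_singleton]
  have hX0s : X 0 * s ∈ Ideal.span {(X 2 * X 0 - X 4 ^ 2 : MvPolynomial (Fin 6) k)} := by
    have h2 := htau2 _ hX0r
    rw [map_mul] at h2
    have h3 : aeval (R := k) (![X 0, 0, X 2, X 3, X 4, 0] : Fin 6 → MvPolynomial (Fin 6) k) (X 0) = X 0 := by simp
    rwa [h3] at h2
  have hs : s ∈ Ideal.span {(X 2 * X 0 - X 4 ^ 2 : MvPolynomial (Fin 6) k)} :=
    Ideal.mem_span_singleton.mpr
      (((prime_q218 (k := k)).2.2 _ _ (Ideal.mem_span_singleton.mp hX0s)).resolve_left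
        (quad_not_dvd_X18 0 (by simp)))
  have hsI1 : s ∈ Ideal.span
      {X 0 * X 1 - X 5 ^ 2, X 1 * X 2, X 2 * X 0 - X 4 ^ 2,
       X 1 * X 4, X 2 * X 5, X 4 * X 5} := Ideal.span_mono (by simp) hs
  -- (h - h1) - s lies in I1
  have hrs : (h - h1) - s ∈ Ideal.span
      {X 0 * X 1 - X 5 ^ 2, X 1 * X 2, X 2 * X 0 - X 4 ^ 2,
       X 1 * X 4, X 2 * X 5, X 4 * X 5} := by
    obtain ⟨a, b, hab⟩ := Ideal.mem_span_pair.mp hr24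
    have hs2 : s = aeval (R := k) (![X 0, 0, X 2, X 3, X 4, 0] : Fin 6 → MvPolynomial (Fin 6) k) a * X 2
        + aeval (R := k) (![X 0, 0, X 2, X 3, X 4, 0] : Fin 6 → MvPolynomial (Fin 6) k) b * X 4 := by
      rw [hsdef, ← hab]
      simp
    have ha : a - aeval (R := k) (![X 0, 0, X 2, X 3, X 4, 0] : Fin 6 → MvPolynomial (Fin 6) k) a ∈
        Ideal.span {(X 1 : MvPolynomial (Fin 6) k), X 5} := by
      refine sub_aeval_mem18 ?_ a
      intro i
      rw [Ideal.Quotient.eq]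
      fin_cases i <;> simp [vec_five18] <;> exact Ideal.subset_span (by simp)
    have hb : b - aeval (R := k) (![X 0, 0, X 2, X 3, X 4, 0] : Fin 6 → MvPolynomial (Fin 6) k) b ∈
        Ideal.span {(X 1 : MvPolynomial (Fin 6) k), X 5} := by
      refine sub_aeval_mem18 ?_ b
      intro i
      rw [Ideal.Quotient.eq]
      fin_cases i <;> simp [vec_five18] <;> exact Ideal.subset_span (by simp)
    obtain ⟨u, w, huw⟩ := Ideal.mem_span_pair.mp ha
    obtain ⟨u', w', huw'⟩ := Ideal.mem_span_pair.mp hb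
    have key : (h - h1) - s = u * (X 1 * X 2) + w * (X 2 * X 5) + u' * (X 1 * X 4)
        + w' * (X 4 * X 5) := by
      rw [hs2, ← hab]
      linear_combination (-(X 2 : MvPolynomial (Fin 6) k)) * huw
        + (-(X 4 : MvPolynomial (Fin 6) k)) * huw'
    rw [key]
    refine add_mem (add_mem (add_mem ?_ ?_) ?_) ?_
    · exact Ideal.mul_mem_left _ _ (Ideal.subset_span (by simp))
    · have hcomm : (w * (X 2 * X 5) : MvPolynomial (Fin 6) k) = w * (X 2 * X 5) := rfl
      exact Ideal.mul_mem_left _ _ (Ideal.subset_span (by simp))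
    · exact Ideal.mul_mem_left _ _ (Ideal.subset_span (by simp))
    · exact Ideal.mul_mem_left _ _ (Ideal.subset_span (by simp))
  -- assemble
  have hhI1 : h ∈ Ideal.span
      {X 0 * X 1 - X 5 ^ 2, X 1 * X 2, X 2 * X 0 - X 4 ^ 2,
       X 1 * X 4, X 2 * X 5, X 4 * X 5} := by
    have he : h = h1 + s + ((h - h1) - s) := by ring
    rw [he]
    exact add_mem (add_mem hh1I1 hsI1) hrs
  have hgh : g - h ∈ Ideal.span {(X 3 : MvPolynomial (Fin 6) k)} := by
    refine sub_aeval_mem18 ?_ g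
    intro i
    rw [Ideal.Quotient.eq]
    fin_cases i <;> simp [vec_five18] <;> exact Ideal.subset_span (by simp)
  have he2 : g = h + (g - h) := by ring
  rw [he2]
  exact add_mem (hI1le hhI1) (Submodule.mem_sup_right hgh)

end Aux

/-- In `R = k[X₁,…,X₆]/(X₁X₂−X₆², X₂X₃−X₄², X₃X₁−X₅², X₁X₄, X₂X₅, X₃X₆, X₄X₅,
X₄X₆, X₅X₆)` (variables `X_i = X (i-1)`): `(0 : X₁) = (X₄)` and
`(0 : X₄) = (X₁, X₅, X₆)`. -/
theorem stmt18 (k : Type*) [Field k]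
    (I : Ideal (MvPolynomial (Fin 6) k))
    (hI : I = Ideal.span
      {X 0 * X 1 - X 5 ^ 2, X 1 * X 2 - X 3 ^ 2, X 2 * X 0 - X 4 ^ 2,
       X 0 * X 3, X 1 * X 4, X 2 * X 5, X 3 * X 4, X 3 * X 5, X 4 * X 5})
    (x : Fin 6 → MvPolynomial (Fin 6) k ⧸ I)
    (hx : ∀ i, x i = Ideal.Quotient.mk I (X i)) :
    (⊥ : Ideal (MvPolynomial (Fin 6) k ⧸ I)).colon (Ideal.span {x 0}) =
      Ideal.span {x 3} ∧
    (⊥ : Ideal (MvPolynomial (Fin 6) k ⧸ I)).colon (Ideal.span {x 3}) =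
      Ideal.span {x 0, x 4, x 5} := by
  have hmk0 : ∀ f ∈ I, Ideal.Quotient.mk I f = 0 := fun f hf =>
    Ideal.Quotient.eq_zero_iff_mem.mpr hf
  constructor
  · apply le_antisymm
    · intro z hz
      rw [Ideal.mem_colon_span_singleton] at hz
      obtain ⟨g, rfl⟩ := Ideal.Quotient.mk_surjective z
      rw [hx 0, ← map_mul, Ideal.mem_bot, Ideal.Quotient.eq_zero_iff_mem,
        mul_comm, hI] at hz
      have := ann_X018 g hz
      obtain ⟨p, hp, q, hq, hpq⟩ := Submodule.mem_sup.mp this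
      obtain ⟨c, hc⟩ := Ideal.mem_span_singleton.mp hq
      rw [← hpq, map_add, hmk0 p (by rw [hI]; exact hp), zero_add, hc, map_mul]
      rw [hx 3]
      exact Ideal.mul_mem_right _ _ (Ideal.subset_span rfl)
    · rw [Ideal.span_le]
      intro y hy
      simp only [Set.mem_singleton_iff] at hy
      subst hy
      rw [SetLike.mem_coe, Ideal.mem_colon_span_singleton, hx 0, hx 3, ← map_mul, Ideal.mem_bot]
      refine hmk0 _ ?_
      rw [hI]
      have : (X 3 * X 0 : MvPolynomial (Fin 6) k) = X 0 * X 3 := by ring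
      rw [this]
      exact Ideal.subset_span (by simp)
  · apply le_antisymm
    · intro z hz
      rw [Ideal.mem_colon_span_singleton] at hz
      obtain ⟨g, rfl⟩ := Ideal.Quotient.mk_surjective z
      rw [hx 3, ← map_mul, Ideal.mem_bot, Ideal.Quotient.eq_zero_iff_mem,
        mul_comm, hI] at hz
      have := ann_X318 g hz
      obtain ⟨p, hp, q, hq, hpq⟩ := Submodule.mem_sup.mp this
      rw [← hpq, map_add, hmk0 p (by rw [hI]; exact hp), zero_add]
      have himg : Ideal.map (Ideal.Quotient.mk I)
          (Ideal.span {(X 0 : MvPolynomial (Fin 6) k), X 4, X 5})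
          ≤ Ideal.span {x 0, x 4, x 5} := by
        rw [Ideal.map_span]
        refine Ideal.span_le.mpr ?_
        rintro y ⟨w, hw, rfl⟩
        simp only [Set.mem_insert_iff, Set.mem_singleton_iff] at hw
        rcases hw with rfl | rfl | rfl
        · exact Ideal.subset_span (by rw [hx 0]; simp)
        · exact Ideal.subset_span (by rw [hx 4]; simp)
        · exact Ideal.subset_span (by rw [hx 5]; simp)
      exact himg (Ideal.mem_map_of_mem _ hq)
    · rw [Ideal.span_le]
      intro y hy
      simp only [Set.mem_insert_iff, Set.mem_singleton_iff] at hy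
      have hmem : ∀ i : Fin 6, (X i * X 3 : MvPolynomial (Fin 6) k) ∈ I →
          x i ∈ (⊥ : Ideal (MvPolynomial (Fin 6) k ⧸ I)).colon (Ideal.span {x 3}) := by
        intro i hi
        rw [Ideal.mem_colon_span_singleton, hx i, hx 3, ← map_mul, Ideal.mem_bot]
        exact hmk0 _ hi
      rcases hy with rfl | rfl | rfl
      · refine hmem 0 ?_
        rw [hI]
        exact Ideal.subset_span (by simp)
      · refine hmem 4 ?_
        rw [hI]
        have : (X 4 * X 3 : MvPolynomial (Fin 6) k) = X 3 * X 4 := by ring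
        rw [this]
        exact Ideal.subset_span (by simp)
      · refine hmem 5 ?_
        rw [hI]
        have : (X 5 * X 3 : MvPolynomial (Fin 6) k) = X 3 * X 5 := by ring
        rw [this]
        exact Ideal.subset_span (by simp)
end
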